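/- arXiv:1802.07547 — 2 statements merged into one kernel-verified Lean document; each statement's English description precedes it below -/
import Mathlib

section
/- The map f : U(1) × SU(3) × SU(3) → S(U(3)×U(3)) given by f(a,A,B) = diag(aA, a^{-1}B) is a surjective group homomorphism with kernel {(1,E,E), (ω, ω^{-1}E, ωE), (ω^{-1}, ωE, ω^{-1}E)} where ω = exp(2πi/3). Consequently S(U(3)×U(3)) ≅ (U(1) × SU(3) × SU(3))/Z_3. -/
noncomputable section

/-- The special unitary group over index type `I`, as a subgroup of the unitary group. -/
def SU (I : Type) [Fintype I] [DecidableEq I] :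
    Subgroup (Matrix.unitaryGroup I ℂ) :=
  MonoidHom.ker (Matrix.detMonoidHom.comp (Matrix.unitaryGroup I ℂ).subtype)

/-- Underlying matrix of an element of `SU I`. -/
def mat {I : Type} [Fintype I] [DecidableEq I] (A : SU I) : Matrix I I ℂ := A.1.1

/-- `ω = exp(2πi/3)`, a primitive cube root of unity. -/
def ω : ℂ := Complex.exp (2 * Real.pi * Complex.I / 3)

/-- The map `f(a,A,B) = diag(aA, a⁻¹B)`, at the level of matrices
(indexed by `Fin 3 ⊕ Fin 3`). -/
def f2 (x : Circle × SU (Fin 3) × SU (Fin 3)) :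
    Matrix (Fin 3 ⊕ Fin 3) (Fin 3 ⊕ Fin 3) ℂ :=
  Matrix.fromBlocks ((x.1 : ℂ) • mat x.2.1) 0 0 (((x.1 : ℂ))⁻¹ • mat x.2.2)

/-- The subgroup `S(U(3)×U(3))` of `SU(6)`: block diagonal matrices `diag(P₁,P₂)` with
`P₁, P₂ ∈ U(3)` and `det P₁ · det P₂ = 1`, as a subset of `SU (Fin 3 ⊕ Fin 3)`. -/
def SU3U3 : Set (SU (Fin 3 ⊕ Fin 3)) :=
  {A | (mat A).toBlocks₁₂ = 0 ∧ (mat A).toBlocks₂₁ = 0 ∧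
    (mat A).toBlocks₁₁ ∈ Matrix.unitaryGroup (Fin 3) ℂ ∧
    (mat A).toBlocks₂₂ ∈ Matrix.unitaryGroup (Fin 3) ℂ ∧
    ((mat A).toBlocks₁₁).det * ((mat A).toBlocks₂₂).det = 1}

/-!
Scalars commute with matrices, so `f` is a homomorphism, and `det (aA) · det (a⁻¹B) = a³a⁻³ = 1`
puts its image in `S(U(3)×U(3))`. Conversely, for `diag(P₁, P₂)` in `S(U(3)×U(3))` the number
`det P₁` lies on the unit circle, hence has a cube root `a` there, and `(a, a⁻¹P₁, aP₂)` is a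
preimage. If `f(a, A, B) = 1` then `A = a⁻¹E` and `B = aE`, and `det A = 1` forces `a³ = 1`, i.e.
`a ∈ {1, ω, ω⁻¹}`. The isomorphism is the first isomorphism theorem.
-/

open Matrix

section SpecialUnitary

variable {m : Type} [Fintype m] [DecidableEq m]

lemma det_mat (A : SU m) : (mat A).det = 1 := A.2

lemma mat_mem_unitaryGroup (A : SU m) : mat A ∈ unitaryGroup m ℂ := A.1.2

lemma mat_injective : Function.Injective (mat : SU m → Matrix m m ℂ) :=
  Subtype.val_injective.comp Subtype.val_injective

lemma mat_mul (A B : SU m) : mat (A * B) = mat A * mat B := rfl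

lemma mat_one : mat (1 : SU m) = 1 := rfl

lemma pow_card_eq_one_of_mat_eq_smul_one {A : SU m} {c : ℂ} (h : mat A = c • 1) :
    c ^ Fintype.card m = 1 := by
  simpa [h] using det_mat A

def SU.mk (P : Matrix m m ℂ) (hP : P ∈ unitaryGroup m ℂ) (hdet : P.det = 1) : SU m :=
  ⟨⟨P, hP⟩, hdet⟩

end SpecialUnitary

lemma Circle.coe_mem_unitary (a : Circle) : (a : ℂ) ∈ unitary ℂ := by
  rw [Unitary.mem_iff_star_mul_self, Complex.star_def, Complex.conj_mul', Circle.norm_coe]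
  norm_num

lemma Circle.exists_pow_eq (z : Circle) {n : ℕ} (hn : n ≠ 0) : ∃ a : Circle, a ^ n = z := by
  obtain ⟨t, rfl⟩ := Circle.exp_surjective z
  refine ⟨Circle.exp (t / n), ?_⟩
  rw [← Circle.exp_natCast_mul, mul_div_cancel₀ _ (Nat.cast_ne_zero.mpr hn)]

section BlockDiagonal

variable {m : Type} [Fintype m] [DecidableEq m]

lemma fromBlocks_mem_unitaryGroup {P Q : Matrix m m ℂ} (hP : P ∈ unitaryGroup m ℂ)
    (hQ : Q ∈ unitaryGroup m ℂ) : fromBlocks P 0 0 Q ∈ unitaryGroup (m ⊕ m) ℂ := by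
  rw [mem_unitaryGroup_iff] at hP hQ ⊢
  rw [star_eq_conjTranspose, fromBlocks_conjTranspose, fromBlocks_multiply]
  simp [← star_eq_conjTranspose, hP, hQ, fromBlocks_one]

lemma circle_smul_mem_unitaryGroup (a : Circle) {P : Matrix m m ℂ}
    (hP : P ∈ unitaryGroup m ℂ) : (a : ℂ) • P ∈ unitaryGroup m ℂ :=
  Unitary.smul_mem_of_mem a.coe_mem_unitary hP

lemma exists_circle_pow_eq_det [Nonempty m] {P : Matrix m m ℂ} (hP : P ∈ unitaryGroup m ℂ) :
    ∃ a : Circle, (a : ℂ) ^ Fintype.card m = P.det := by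
  have hdet : P.det ∈ Submonoid.unitSphere ℂ :=
    mem_sphere_zero_iff_norm.mpr (CStarRing.norm_of_mem_unitary (det_of_mem_unitary hP))
  obtain ⟨a, ha⟩ := Circle.exists_pow_eq ⟨P.det, hdet⟩ (Fintype.card_ne_zero (α := m))
  exact ⟨a, congrArg Subtype.val ha⟩

lemma det_smul_mul_det_inv_smul (a : Circle) (A B : SU m) :
    ((a : ℂ) • mat A).det * ((a : ℂ)⁻¹ • mat B).det = 1 := by
  rw [det_smul, det_smul, det_mat, det_mat, inv_pow, mul_one, mul_one,
    mul_inv_cancel₀ (pow_ne_zero _ a.coe_ne_zero)]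

def twistedBlockDiag (x : Circle × SU m × SU m) : SU (m ⊕ m) :=
  SU.mk (fromBlocks ((x.1 : ℂ) • mat x.2.1) 0 0 ((x.1 : ℂ)⁻¹ • mat x.2.2))
    (fromBlocks_mem_unitaryGroup (circle_smul_mem_unitaryGroup x.1 (mat_mem_unitaryGroup _))
      (circle_smul_mem_unitaryGroup x.1⁻¹ (mat_mem_unitaryGroup _)))
    (by rw [det_fromBlocks_zero₂₁]; exact det_smul_mul_det_inv_smul x.1 x.2.1 x.2.2)

lemma mat_twistedBlockDiag (x : Circle × SU m × SU m) :
    mat (twistedBlockDiag x) =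
      fromBlocks ((x.1 : ℂ) • mat x.2.1) 0 0 ((x.1 : ℂ)⁻¹ • mat x.2.2) :=
  rfl

lemma twistedBlockDiag_mul (x y : Circle × SU m × SU m) :
    twistedBlockDiag (x * y) = twistedBlockDiag x * twistedBlockDiag y := by
  apply mat_injective
  simp only [mat_mul, mat_twistedBlockDiag, fromBlocks_multiply, Prod.fst_mul, Prod.snd_mul,
    Circle.coe_mul, mul_inv, smul_mul_smul_comm, Matrix.mul_zero, Matrix.zero_mul, add_zero,
    zero_add]

lemma twistedBlockDiag_eq_one_iff (x : Circle × SU m × SU m) :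
    twistedBlockDiag x = 1 ↔ mat x.2.1 = (x.1 : ℂ)⁻¹ • 1 ∧ mat x.2.2 = (x.1 : ℂ) • 1 := by
  have ha := x.1.coe_ne_zero
  rw [← mat_injective.eq_iff, mat_one, mat_twistedBlockDiag, ← fromBlocks_one, fromBlocks_inj,
    ← inv_smul_eq_iff₀ (inv_ne_zero ha), inv_inv, inv_smul_eq_iff₀ ha]
  simp only [true_and]

lemma exists_twistedBlockDiag_eq [Nonempty m] {P Q : Matrix m m ℂ} (hP : P ∈ unitaryGroup m ℂ)
    (hQ : Q ∈ unitaryGroup m ℂ) (hdet : P.det * Q.det = 1) :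
    ∃ x, mat (twistedBlockDiag x) = fromBlocks P 0 0 Q := by
  obtain ⟨a, ha⟩ := exists_circle_pow_eq_det hP
  have ha0 := a.coe_ne_zero
  refine ⟨(a, SU.mk ((a : ℂ)⁻¹ • P) (circle_smul_mem_unitaryGroup a⁻¹ hP) ?_,
    SU.mk ((a : ℂ) • Q) (circle_smul_mem_unitaryGroup a hQ) ?_), ?_⟩
  · rw [det_smul, inv_pow, ha, inv_mul_cancel₀ (left_ne_zero_of_mul_eq_one hdet)]
  · rw [det_smul, ha, hdet]
  · change fromBlocks ((a : ℂ) • ((a : ℂ)⁻¹ • P)) 0 0 ((a : ℂ)⁻¹ • ((a : ℂ) • Q)) = _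
    rw [smul_smul, smul_smul, mul_inv_cancel₀ ha0, inv_mul_cancel₀ ha0, one_smul, one_smul]

def twistedBlockDiagHom : Circle × SU m × SU m →* SU (m ⊕ m) :=
  MonoidHom.mk' twistedBlockDiag twistedBlockDiag_mul

end BlockDiagonal

lemma omega_isPrimitiveRoot : IsPrimitiveRoot ω 3 := by
  simpa [ω] using Complex.isPrimitiveRoot_exp 3 three_ne_zero

lemma Complex.pow_three_eq_one_iff (z : ℂ) : z ^ 3 = 1 ↔ z = 1 ∨ z = ω ∨ z = ω⁻¹ := by
  have hω := omega_isPrimitiveRoot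
  constructor
  · intro hz
    obtain ⟨i, hi, rfl⟩ := hω.eq_pow_of_pow_eq_one hz
    interval_cases i
    · simp
    · simp
    · exact Or.inr (Or.inr (eq_inv_of_mul_eq_one_left (by rw [← pow_succ, hω.pow_eq_one])))
  · rintro (rfl | rfl | rfl) <;> simp [hω.pow_eq_one]

lemma twistedBlockDiag_eq_one_iff_fin_three (x : Circle × SU (Fin 3) × SU (Fin 3)) :
    twistedBlockDiag x = 1 ↔
      ((x.1 : ℂ) = 1 ∧ mat x.2.1 = 1 ∧ mat x.2.2 = 1) ∨
      ((x.1 : ℂ) = ω ∧ mat x.2.1 = ω⁻¹ • 1 ∧ mat x.2.2 = ω • 1) ∨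
      ((x.1 : ℂ) = ω⁻¹ ∧ mat x.2.1 = ω • 1 ∧ mat x.2.2 = ω⁻¹ • 1) := by
  rw [twistedBlockDiag_eq_one_iff]
  constructor
  · rintro ⟨hA, hB⟩
    have ha : (x.1 : ℂ) ^ 3 = 1 := by simpa using pow_card_eq_one_of_mat_eq_smul_one hA
    rcases (Complex.pow_three_eq_one_iff _).1 ha with h | h | h <;> simp_all
  · rintro (⟨h, hA, hB⟩ | ⟨h, hA, hB⟩ | ⟨h, hA, hB⟩) <;> simp [h, hA, hB]

lemma twistedBlockDiag_mem_SU3U3 (x : Circle × SU (Fin 3) × SU (Fin 3)) :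
    twistedBlockDiag x ∈ SU3U3 :=
  ⟨rfl, rfl, circle_smul_mem_unitaryGroup x.1 (mat_mem_unitaryGroup _),
    circle_smul_mem_unitaryGroup x.1⁻¹ (mat_mem_unitaryGroup _),
    det_smul_mul_det_inv_smul x.1 x.2.1 x.2.2⟩

lemma coe_range_twistedBlockDiagHom :
    ((twistedBlockDiagHom (m := Fin 3)).range : Set (SU (Fin 3 ⊕ Fin 3))) = SU3U3 := by
  ext A
  constructor
  · rintro ⟨x, rfl⟩
    exact twistedBlockDiag_mem_SU3U3 x
  · rintro ⟨h₁₂, h₂₁, hP, hQ, hdet⟩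
    obtain ⟨x, hx⟩ := exists_twistedBlockDiag_eq hP hQ hdet
    refine ⟨x, mat_injective ?_⟩
    rw [twistedBlockDiagHom, MonoidHom.mk'_apply, hx]
    conv_rhs => rw [← fromBlocks_toBlocks (mat A), h₁₂, h₂₁]

lemma nonempty_mulEquiv_quotient_of_range_of_ker {G H : Type*} [Group G] [Group H] (φ : G →* H)
    {S : Subgroup H} {K : Subgroup G} [K.Normal] (hS : φ.range = S) (hK : φ.ker = K) :
    Nonempty (S ≃* G ⧸ K) :=
  ⟨(MulEquiv.subgroupCongr hS).symm.trans
    ((QuotientGroup.quotientKerEquivRange φ).symm.trans (QuotientGroup.quotientMulEquivOfEq hK))⟩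

/-- `f(a,A,B) = diag(aA, a⁻¹B)` is a surjective group homomorphism from
`U(1) × SU(3) × SU(3)` onto `S(U(3)×U(3))` with kernel
`{(1,E,E), (ω,ω⁻¹E,ωE), (ω⁻¹,ωE,ω⁻¹E)}`, `ω = exp(2πi/3)`; consequently
`S(U(3)×U(3)) ≅ (U(1) × SU(3) × SU(3))/ℤ₃`. -/
theorem sU3U3_iso_circle_su3_su3_quot_zmod3 :
    -- `f` is a group homomorphism
    (∀ x y : Circle × SU (Fin 3) × SU (Fin 3), f2 (x * y) = f2 x * f2 y) ∧
    -- `f` takes values in `S(U(3)×U(3))`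
    (∀ x, ∃ A : SU (Fin 3 ⊕ Fin 3), A ∈ SU3U3 ∧ mat A = f2 x) ∧
    -- `f` is surjective onto `S(U(3)×U(3))`
    (∀ A ∈ SU3U3, ∃ x, f2 x = mat A) ∧
    -- the kernel of `f` is `{(1,E,E), (ω,ω⁻¹E,ωE), (ω⁻¹,ωE,ω⁻¹E)}`
    (∀ x : Circle × SU (Fin 3) × SU (Fin 3),
      (f2 x = 1 ↔
        ((x.1 : ℂ) = 1 ∧ mat x.2.1 = 1 ∧ mat x.2.2 = 1) ∨
        ((x.1 : ℂ) = ω ∧ mat x.2.1 = ω⁻¹ • 1 ∧ mat x.2.2 = ω • 1) ∨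
        ((x.1 : ℂ) = ω⁻¹ ∧ mat x.2.1 = ω • 1 ∧ mat x.2.2 = ω⁻¹ • 1))) ∧
    -- consequently `S(U(3)×U(3)) ≅ (U(1) × SU(3) × SU(3))/ℤ₃`
    (∀ (S : Subgroup (SU (Fin 3 ⊕ Fin 3)))
      (K : Subgroup (Circle × SU (Fin 3) × SU (Fin 3))) [K.Normal],
      (S : Set (SU (Fin 3 ⊕ Fin 3))) = SU3U3 →
      (K : Set (Circle × SU (Fin 3) × SU (Fin 3))) = {x | f2 x = 1} →
        Nonempty (S ≃* (Circle × SU (Fin 3) × SU (Fin 3)) ⧸ K)) := by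
  let φ : Circle × SU (Fin 3) × SU (Fin 3) →* SU (Fin 3 ⊕ Fin 3) := twistedBlockDiagHom
  have f2_eq : ∀ x, f2 x = mat (φ x) := fun _ => rfl
  have f2_eq_one_iff : ∀ x, f2 x = 1 ↔ φ x = 1 := fun x => by
    rw [f2_eq, ← mat_one, mat_injective.eq_iff]
  refine ⟨fun x y => by rw [f2_eq, map_mul, mat_mul]; rfl,
    fun x => ⟨φ x, twistedBlockDiag_mem_SU3U3 x, rfl⟩, ?_,
    fun x => (f2_eq_one_iff x).trans (twistedBlockDiag_eq_one_iff_fin_three x), ?_⟩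
  · intro A hA
    obtain ⟨x, rfl⟩ : A ∈ φ.range := by rwa [← SetLike.mem_coe, coe_range_twistedBlockDiagHom]
    exact ⟨x, rfl⟩
  · intro S K _ hS hK
    refine nonempty_mulEquiv_quotient_of_range_of_ker φ ?_ ?_
    · exact SetLike.coe_injective (coe_range_twistedBlockDiagHom.trans hS.symm)
    · refine SetLike.coe_injective (hK ▸ ?_)
      ext x
      exact (f2_eq_one_iff x).symm
end
end

section
/- For p, q ∈ Sp(1) (unit quaternions), the map φ(p,q) on the Cayley algebra H ⊕ He₄ defined by φ(p,q)(m + ne₄) = qmq̄ + (pnq̄)e₄ is an algebra automorphism of the Cayley algebra, and φ : Sp(1) × Sp(1) → Aut(octonions) is a group homomorphism with kernel {(1,1), (−1,−1)}. -/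
/-!
Unit quaternions are the unitary elements of `ℍ`. When `φ(p,q)(xy)` and `φ(p,q)x · φ(p,q)y` are
expanded, they differ only by factors `q̄ q` and `p̄ p`, which are `1`; and `φ(p̄,q̄)` inverts
`φ(p,q)`. If `φ(p,q)` is the identity, then `q m q̄ = m` for all `m`, so `q`
is central in `ℍ`, hence real, hence `±1`; and `p q̄ = 1` forces `p = q`.
-/

open Quaternion

noncomputable section

/-- The Cayley algebra (octonions), realized as `ℍ ⊕ ℍe₄`. -/
abbrev Oct := ℍ[ℝ] × ℍ[ℝ]

/-- Octonion multiplication: `(a + be₄)(c + de₄) = (ac - d̄b) + (da + bc̄)e₄`. -/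
def omul (x y : Oct) : Oct :=
  (x.1 * y.1 - star y.2 * x.2, y.2 * x.1 + x.2 * star y.1)

/-- `φ(p,q)(m + ne₄) = qmq̄ + (pnq̄)e₄`. -/
def φ (p q : ℍ[ℝ]) (x : Oct) : Oct := (q * x.1 * star q, p * x.2 * star q)

namespace Quaternion

theorem mem_unitary_of_norm_eq_one {q : ℍ[ℝ]} (hq : ‖q‖ = 1) : q ∈ unitary ℍ[ℝ] := by
  have hnormSq : ((normSq q : ℝ) : ℍ[ℝ]) = 1 := by
    rw [normSq_eq_norm_mul_self, hq, mul_one, coe_one]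
  exact ⟨(star_mul_self q).trans hnormSq, (self_mul_star q).trans hnormSq⟩

theorem eq_coe_re_of_forall_commute {q : ℍ[ℝ]} (h : ∀ m : ℍ[ℝ], Commute q m) : q = q.re := by
  -- `i` and `j` are kept abstract: the literal `⟨0, 1, 0, 0⟩` has type `ℍ[ℝ,-1,0,-1]`, on which
  -- the component lemmas for `ℍ[ℝ]` do not fire.
  obtain ⟨i, hi⟩ : ∃ i : ℍ[ℝ], i.re = 0 ∧ i.imI = 1 ∧ i.imJ = 0 ∧ i.imK = 0 :=
    ⟨⟨0, 1, 0, 0⟩, rfl, rfl, rfl, rfl⟩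
  obtain ⟨j, hj⟩ : ∃ j : ℍ[ℝ], j.re = 0 ∧ j.imI = 0 ∧ j.imJ = 1 ∧ j.imK = 0 :=
    ⟨⟨0, 0, 1, 0⟩, rfl, rfl, rfl, rfl⟩
  have hqi := Quaternion.ext_iff.mp (h i).eq
  have hqj := Quaternion.ext_iff.mp (h j).eq
  simp only [re_mul, imI_mul, imJ_mul, imK_mul, hi, hj] at hqi hqj
  ext <;> simp <;> linarith

theorem eq_one_or_eq_neg_one_of_forall_commute {q : ℍ[ℝ]}
    (hq : q ∈ unitary ℍ[ℝ]) (h : ∀ m : ℍ[ℝ], Commute q m) : q = 1 ∨ q = -1 := by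
  have hre := eq_coe_re_of_forall_commute h
  have hsq : q.re * q.re = 1 := by
    have := Unitary.star_mul_self_of_mem hq
    rwa [hre, star_coe, ← coe_mul, ← coe_one, coe_inj] at this
  rw [hre]
  rcases mul_self_eq_one_iff.mp hsq with h1 | h1 <;> simp [h1]

end Quaternion

theorem φ_add (p q : ℍ[ℝ]) (x y : Oct) : φ p q (x + y) = φ p q x + φ p q y := by
  simp only [φ, Prod.fst_add, Prod.snd_add, mul_add, add_mul, Prod.mk_add_mk]

theorem φ_smul (p q : ℍ[ℝ]) (r : ℝ) (x : Oct) : φ p q (r • x) = r • φ p q x := by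
  simp only [φ, Prod.smul_fst, Prod.smul_snd, mul_smul_comm, smul_mul_assoc, Prod.smul_mk]

theorem φ_mul_mul (p q p' q' : ℍ[ℝ]) (x : Oct) :
    φ (p * p') (q * q') x = φ p q (φ p' q' x) := by
  simp only [φ, star_mul, mul_assoc]

theorem φ_one_one (x : Oct) : φ 1 1 x = x := by
  simp [φ]

theorem φ_neg_one_neg_one (x : Oct) : φ (-1) (-1) x = x := by
  simp [φ]

section Unitary

variable {p q : ℍ[ℝ]}

theorem φ_omul (hp : p ∈ unitary ℍ[ℝ]) (hq : q ∈ unitary ℍ[ℝ]) (x y : Oct) : φ p q (omul x y) = omul (φ p q x) (φ p q y) := by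
  have cancel {u : ℍ[ℝ]} (hu : u ∈ unitary ℍ[ℝ]) (z : ℍ[ℝ]) : star u * (u * z) = z := by
    rw [← mul_assoc, Unitary.star_mul_self_of_mem hu, one_mul]
  simp only [φ, omul, star_mul, star_star, mul_sub, sub_mul, mul_add, add_mul, mul_assoc,
    cancel hp, cancel hq]

theorem φ_star_star_leftInverse (hp : p ∈ unitary ℍ[ℝ]) (hq : q ∈ unitary ℍ[ℝ]) :
    Function.LeftInverse (φ (star p) (star q)) (φ p q) := by
  intro x
  rw [← φ_mul_mul, Unitary.star_mul_self_of_mem hp, Unitary.star_mul_self_of_mem hq, φ_one_one]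

theorem φ_bijective (hp : p ∈ unitary ℍ[ℝ]) (hq : q ∈ unitary ℍ[ℝ]) : Function.Bijective (φ p q) := by
  have hright := φ_star_star_leftInverse (Unitary.star_mem hp) (Unitary.star_mem hq)
  rw [star_star, star_star] at hright
  exact Function.bijective_iff_has_inverse.mpr
    ⟨φ (star p) (star q), φ_star_star_leftInverse hp hq, hright⟩

theorem φ_eq_id_iff (hq : q ∈ unitary ℍ[ℝ]) :
    (∀ x : Oct, φ p q x = x) ↔ (p = 1 ∧ q = 1) ∨ (p = -1 ∧ q = -1) := by
  constructor
  · intro h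
    have hpq : p = q := by
      have h01 : p * star q = 1 := by simpa [φ] using congrArg Prod.snd (h (0, 1))
      calc p = p * (star q * q) := by rw [Unitary.star_mul_self_of_mem hq, mul_one]
        _ = q := by rw [← mul_assoc, h01, one_mul]
    have hcentral (m : ℍ[ℝ]) : Commute q m := by
      refine (commute_unitary_iff_star_right_conjugate hq).mpr ?_
      simpa [φ] using congrArg Prod.fst (h (m, 0))
    subst hpq
    rcases eq_one_or_eq_neg_one_of_forall_commute hq hcentral with rfl | rfl
    exacts [Or.inl ⟨rfl, rfl⟩, Or.inr ⟨rfl, rfl⟩]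
  · rintro (⟨rfl, rfl⟩ | ⟨rfl, rfl⟩)
    exacts [φ_one_one, φ_neg_one_neg_one]

end Unitary

/-- For unit quaternions `p, q`, the map `φ(p,q)` is an algebra automorphism of the
Cayley algebra, `φ : Sp(1) × Sp(1) → Aut(octonions)` is a group homomorphism, and its
kernel is `{(1,1), (-1,-1)}`. -/
theorem φ_hom_with_kernel_pm_one :
    ∀ p q : ℍ[ℝ], ‖p‖ = 1 → ‖q‖ = 1 →
      -- `φ(p,q)` is multiplicative
      (∀ x y : Oct, φ p q (omul x y) = omul (φ p q x) (φ p q y)) ∧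
      -- `φ(p,q)` is `ℝ`-linear
      (∀ x y : Oct, φ p q (x + y) = φ p q x + φ p q y) ∧
      (∀ (r : ℝ) (x : Oct), φ p q (r • x) = r • φ p q x) ∧
      -- `φ(p,q)` is bijective
      Function.Bijective (φ p q) ∧
      -- `φ` is a group homomorphism
      (∀ p' q' : ℍ[ℝ], ‖p'‖ = 1 → ‖q'‖ = 1 →
        ∀ x : Oct, φ (p * p') (q * q') x = φ p q (φ p' q' x)) ∧
      -- the kernel of `φ` is `{(1,1), (-1,-1)}`
      ((∀ x : Oct, φ p q x = x) ↔ (p = 1 ∧ q = 1) ∨ (p = -1 ∧ q = -1)) := by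
  intro p q hp hq
  have hpU := mem_unitary_of_norm_eq_one hp
  have hqU := mem_unitary_of_norm_eq_one hq
  exact ⟨φ_omul hpU hqU, φ_add p q, φ_smul p q, φ_bijective hpU hqU,
    fun p' q' _ _ => φ_mul_mul p q p' q', φ_eq_id_iff hqU⟩
end
end
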